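/- With J, S, a as above, the induction step of the triangular-part identity holds: (J^{n+1})_+ = (Jⁿ)_+ J + (Jⁿ)_d J_+ - (J_+ Jⁿ)_d, where J_+ = aS. -/

import Mathlib

noncomputable section

/-- ℓ²(ℤ) -/
abbrev H2 : Type := lp (fun _ : ℤ => ℂ) 2

/-- the standard unit vectors δ_n -/
noncomputable def delta (n : ℤ) : H2 := lp.single 2 n 1

/-- matrix entries X_{jk} = ⟨δ_j, X δ_k⟩ -/
noncomputable def ent (X : H2 →L[ℂ] H2) (j k : ℤ) : ℂ := inner ℂ (delta j) (X (delta k))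

open ContinuousLinearMap

/-!
Right multiplication by `J` replaces column `k` by `a (k-1) col (k-1) + b k col k + a k col (k+1)`.
So `(Jⁿ)₊ J` differs from `(J^{n+1})₊` in just two places: it misses `a (k-1) (Jⁿ)_{k-1,k-1}` at
`(k-1, k)`, which `(Jⁿ)_d J₊` supplies, and it has the extra diagonal entry `a j (Jⁿ)_{j,j+1}`,
which equals `(J₊ Jⁿ)_{jj} = a j (Jⁿ)_{j+1,j}` because `Jⁿ` is real symmetric.
-/

lemma delta_apply (m i : ℤ) : delta m i = if i = m then 1 else 0 := by
  rw [delta, lp.single_apply]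
  split_ifs <;> simp_all

lemma ent_eq_apply_delta (X : H2 →L[ℂ] H2) (j k : ℤ) : ent X j k = X (delta k) j := by
  simp [ent, delta, lp.inner_single_left]

lemma apply_delta_eq_of_ent {X : H2 →L[ℂ] H2} {k : ℤ} {v : H2} (h : ∀ j, ent X j k = v j) :
    X (delta k) = v :=
  lp.ext <| funext fun j => by rw [← ent_eq_apply_delta, h]

lemma ent_ext {X Y : H2 →L[ℂ] H2} (h : ∀ j k, ent X j k = ent Y j k) : X = Y := by
  have hdelta : ∀ k, X (delta k) = Y (delta k) := fun k =>
    apply_delta_eq_of_ent fun j => by rw [h, ent_eq_apply_delta]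
  refine ContinuousLinearMap.ext fun f => ?_
  have hf : HasSum (fun i => f i • delta i) f := by
    simpa [delta, ← lp.single_smul] using lp.hasSum_single ENNReal.ofNat_ne_top f
  have hX := hf.mapL X
  have hY := hf.mapL Y
  simp only [map_smul, hdelta] at hX hY
  exact hX.unique hY

lemma ent_add (X Y : H2 →L[ℂ] H2) (j k : ℤ) : ent (X + Y) j k = ent X j k + ent Y j k := by
  simp [ent]

lemma ent_sub (X Y : H2 →L[ℂ] H2) (j k : ℤ) : ent (X - Y) j k = ent X j k - ent Y j k := by
  simp [ent]

lemma ent_one (j k : ℤ) : ent 1 j k = if j = k then 1 else 0 := by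
  simp [ent_eq_apply_delta, delta_apply]

lemma ent_adjoint (X : H2 →L[ℂ] H2) (j k : ℤ) :
    ent (adjoint X) j k = starRingEnd ℂ (ent X k j) := by
  rw [ent, ent, ← inner_conj_symm, adjoint_inner_left]

lemma ent_mul_of_apply_delta {X Y : H2 →L[ℂ] H2} {k m : ℤ} {c : ℂ}
    (hY : Y (delta k) = c • delta m) (j : ℤ) : ent (X * Y) j k = c * ent X j m := by
  rw [ent, mul_apply_eq_comp, hY, map_smul, inner_smul_right, ent]

section Shift

variable {S : H2 →L[ℂ] H2} (hS : ∀ j k, ent S j k = if k = j + 1 then 1 else 0)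
include hS

lemma apply_delta_of_ent_shift (k : ℤ) : S (delta k) = delta (k - 1) :=
  apply_delta_eq_of_ent fun j => by rw [hS, delta_apply]; exact if_congr (by omega) rfl rfl

lemma adjoint_apply_delta_of_ent_shift (k : ℤ) : adjoint S (delta k) = delta (k + 1) :=
  apply_delta_eq_of_ent fun j => by
    rw [ent_adjoint, hS, delta_apply]
    split_ifs <;> simp

end Shift

lemma apply_delta_of_ent_diag {D : H2 →L[ℂ] H2} {d : ℤ → ℂ}
    (hD : ∀ j k, ent D j k = if j = k then d j else 0) (k : ℤ) : D (delta k) = d k • delta k :=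
  apply_delta_eq_of_ent fun j => by
    rw [hD, lp.coeFn_smul, Pi.smul_apply, delta_apply]
    split_ifs <;> simp_all

lemma adjoint_eq_self_of_ent_diag {D : H2 →L[ℂ] H2} {d : ℤ → ℝ}
    (hD : ∀ j k, ent D j k = if j = k then (d j : ℂ) else 0) : adjoint D = D :=
  ent_ext fun j k => by
    rw [ent_adjoint, hD, hD]
    by_cases h : j = k <;> simp [h, Ne.symm]

section Jacobi

variable {a b : ℤ → ℝ} {S A Mb J : H2 →L[ℂ] H2}

lemma jacobi_apply_delta (hS : ∀ j k, ent S j k = if k = j + 1 then 1 else 0)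
    (hA : ∀ j k, ent A j k = if j = k then (a j : ℂ) else 0)
    (hMb : ∀ j k, ent Mb j k = if j = k then (b j : ℂ) else 0)
    (hJ : J = A * S + adjoint S * A + Mb) (k : ℤ) :
    J (delta k) = (a (k - 1) : ℂ) • delta (k - 1) + (b k : ℂ) • delta k
      + (a k : ℂ) • delta (k + 1) := by
  simp only [hJ, add_apply, mul_apply_eq_comp, apply_delta_of_ent_shift hS,
    adjoint_apply_delta_of_ent_shift hS, apply_delta_of_ent_diag hA, apply_delta_of_ent_diag hMb,
    map_smul]
  abel

lemma isSelfAdjoint_jacobi (hA : ∀ j k, ent A j k = if j = k then (a j : ℂ) else 0)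
    (hMb : ∀ j k, ent Mb j k = if j = k then (b j : ℂ) else 0)
    (hJ : J = A * S + adjoint S * A + Mb) : IsSelfAdjoint J := by
  rw [IsSelfAdjoint, star_eq_adjoint, hJ]
  simp only [map_add, mul_def, adjoint_comp, adjoint_eq_self_of_ent_diag hA,
    adjoint_eq_self_of_ent_diag hMb, adjoint_adjoint]
  abel

variable (hJ : ∀ k, J (delta k) = (a (k - 1) : ℂ) • delta (k - 1) + (b k : ℂ) • delta k
  + (a k : ℂ) • delta (k + 1))
include hJ

lemma ent_mul_jacobi (X : H2 →L[ℂ] H2) (j k : ℤ) :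
    ent (X * J) j k = a (k - 1) * ent X j (k - 1) + b k * ent X j k + a k * ent X j (k + 1) := by
  simp only [ent, mul_apply_eq_comp, hJ, map_add, map_smul, inner_add_right, inner_smul_right]

lemma conj_ent_pow_jacobi (m : ℕ) (j k : ℤ) :
    starRingEnd ℂ (ent (J ^ m) j k) = ent (J ^ m) j k := by
  induction m generalizing j k with
  | zero => rw [pow_zero, ent_one]; split_ifs <;> simp
  | succ m ih =>
    simp only [pow_succ, ent_mul_jacobi hJ, map_add, map_mul, Complex.conj_ofReal, ih]

lemma ent_pow_jacobi_symm (hJsa : IsSelfAdjoint J) (m : ℕ) (j k : ℤ) :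
    ent (J ^ m) j k = ent (J ^ m) k j := by
  rw [← conj_ent_pow_jacobi hJ, ← ent_adjoint, ← star_eq_adjoint, (hJsa.pow m).star_eq]

end Jacobi

section WeightedShift

variable {a : ℤ → ℝ} {S A : H2 →L[ℂ] H2} (hS : ∀ j k, ent S j k = if k = j + 1 then 1 else 0)
  (hA : ∀ j k, ent A j k = if j = k then (a j : ℂ) else 0)
include hS hA

lemma ent_mul_weightedShift (X : H2 →L[ℂ] H2) (j k : ℤ) :
    ent (X * (A * S)) j k = a (k - 1) * ent X j (k - 1) :=
  ent_mul_of_apply_delta (by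
    rw [mul_apply_eq_comp, apply_delta_of_ent_shift hS, apply_delta_of_ent_diag hA]) j

lemma ent_weightedShift_mul (X : H2 →L[ℂ] H2) (j k : ℤ) :
    ent (A * S * X) j k = a j * ent X (j + 1) k := by
  rw [ent, mul_apply_eq_comp, mul_apply_eq_comp, ← adjoint_inner_left,
    adjoint_eq_self_of_ent_diag hA, apply_delta_of_ent_diag hA, inner_smul_left,
    ← adjoint_inner_left, adjoint_apply_delta_of_ent_shift hS, Complex.conj_ofReal, ent]

end WeightedShift

lemma upper_entry_mul_tridiagonal (a b : ℤ → ℂ) (e : ℤ → ℤ → ℂ)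
    (he : ∀ j, e j (j + 1) = e (j + 1) j) (j k : ℤ) :
    (if j < k then a (k - 1) * e j (k - 1) + b k * e j k + a k * e j (k + 1) else 0) =
      (a (k - 1) * (if j < k - 1 then e j (k - 1) else 0) + b k * (if j < k then e j k else 0)
        + a k * (if j < k + 1 then e j (k + 1) else 0)
        + a (k - 1) * (if j = k - 1 then e j j else 0))
        - (if j = k then a j * e (j + 1) j else 0) := by
  rcases lt_trichotomy j k with hjk | rfl | hjk
  · obtain rfl | hj := eq_or_ne j (k - 1)
    · rw [if_pos hjk, if_pos hjk, if_neg (lt_irrefl _), if_pos (by omega), if_pos rfl,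
        if_neg hjk.ne]
      ring
    · simp [hjk, hj, hjk.ne, show j < k - 1 by omega, show j < k + 1 by omega]
  · simp [he, show ¬ j < j - 1 by omega, show j ≠ j - 1 by omega]
  · simp [hjk.not_gt, hjk.ne', show ¬ j < k - 1 by omega, show ¬ j < k + 1 by omega,
      show j ≠ k - 1 by omega]

theorem stmt11_general (a b : ℤ → ℝ)
    (S A Mb J : H2 →L[ℂ] H2)
    (hS : ∀ j k : ℤ, ent S j k = if k = j + 1 then 1 else 0)
    (hA : ∀ j k : ℤ, ent A j k = if j = k then (a j : ℂ) else 0)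
    (hMb : ∀ j k : ℤ, ent Mb j k = if j = k then (b j : ℂ) else 0)
    (hJ : J = A * S + ContinuousLinearMap.adjoint S * A + Mb)
    (n : ℕ)
    (Up1 Upn Ddn Dcross : H2 →L[ℂ] H2)
    (hUp1 : ∀ j k : ℤ, ent Up1 j k = if j < k then ent (J ^ (n + 1)) j k else 0)
    (hUpn : ∀ j k : ℤ, ent Upn j k = if j < k then ent (J ^ n) j k else 0)
    (hDdn : ∀ j k : ℤ, ent Ddn j k = if j = k then ent (J ^ n) j j else 0)
    (hDcross : ∀ j k : ℤ,
      ent Dcross j k = if j = k then ent (A * S * J ^ n) j j else 0) :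
    Up1 = Upn * J + Ddn * (A * S) - Dcross := by
  have hJd := jacobi_apply_delta hS hA hMb hJ
  refine ent_ext fun j k => ?_
  rw [hUp1, ent_sub, ent_add, ent_mul_jacobi hJd, ent_mul_weightedShift hS hA, hDcross,
    hUpn, hUpn, hUpn, hDdn, pow_succ, ent_mul_jacobi hJd, ent_weightedShift_mul hS hA]
  exact upper_entry_mul_tridiagonal (fun i => (a i : ℂ)) (fun i => (b i : ℂ)) (ent (J ^ n))
    (fun i => ent_pow_jacobi_symm hJd (isSelfAdjoint_jacobi hA hMb hJ) n i (i + 1)) j k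

/-- The induction step of the triangular-part identity:
`(J^{n+1})₊ = (Jⁿ)₊ J + (Jⁿ)_d J₊ - (J₊ Jⁿ)_d`, where `J₊ = aS`. -/
theorem stmt11 (a b : ℤ → ℝ) (ha : ∀ n, 0 < a n)
    (S A Mb J : H2 →L[ℂ] H2)
    (hS : ∀ j k : ℤ, ent S j k = if k = j + 1 then 1 else 0)
    (hA : ∀ j k : ℤ, ent A j k = if j = k then (a j : ℂ) else 0)
    (hMb : ∀ j k : ℤ, ent Mb j k = if j = k then (b j : ℂ) else 0)
    (hJ : J = A * S + ContinuousLinearMap.adjoint S * A + Mb)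
    (n : ℕ)
    (Up1 Upn Ddn Dcross : H2 →L[ℂ] H2)
    (hUp1 : ∀ j k : ℤ, ent Up1 j k = if j < k then ent (J ^ (n + 1)) j k else 0)
    (hUpn : ∀ j k : ℤ, ent Upn j k = if j < k then ent (J ^ n) j k else 0)
    (hDdn : ∀ j k : ℤ, ent Ddn j k = if j = k then ent (J ^ n) j j else 0)
    (hDcross : ∀ j k : ℤ,
      ent Dcross j k = if j = k then ent (A * S * J ^ n) j j else 0) :
    Up1 = Upn * J + Ddn * (A * S) - Dcross :=
  stmt11_general a b S A Mb J hS hA hMb hJ n Up1 Upn Ddn Dcross hUp1 hUpn hDdn hDcross
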